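/- arXiv:1501.03299 — 2 statements merged into one kernel-verified Lean document; each statement's English description precedes it below -/
import Mathlib

section
/- Let V be a vector space of dimension 2n over an algebraically closed field of characteristic zero, and let λ₁, λ₂ be two alternating bilinear forms on V. Suppose that for every element λ of the pencil spanned by λ₁, λ₂ which is degenerate, the kernel of λ has dimension exactly 2, and that the degenerate members of the pencil are λ'₁,…,λ'ₙ with kernels K₁,…,Kₙ satisfying V = K₁ ⊕ ⋯ ⊕ Kₙ. Then for any n-dimensional subspace U ⊆ V that is isotropic for both λ₁ and λ₂, one has U = (U ∩ K₁) ⊕ ⋯ ⊕ (U ∩ Kₙ) with dim(U ∩ Kᵢ) = 1 for every i. -/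
open Module Submodule

lemma aux_finrank_biSup {k V : Type*} [Field k] [AddCommGroup V] [Module k V]
    [FiniteDimensional k V] {ι : Type*} (p : ι → Submodule k V) (hp : iSupIndep p)
    (s : Finset ι) :
    Module.finrank k (⨆ i ∈ s, p i : Submodule k V) = ∑ i ∈ s, Module.finrank k (p i) := by
  classical
  induction s using Finset.induction_on with
  | empty => simp
  | @insert a s ha ih =>
    rw [Finset.sum_insert ha, ← ih]
    have hsup : (⨆ i ∈ insert a s, p i : Submodule k V) = p a ⊔ ⨆ i ∈ s, p i := by
      simp [iSup_or, iSup_sup_eq]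
    have hdisj : p a ⊓ (⨆ i ∈ s, p i) = ⊥ := by
      have hle : (⨆ i ∈ s, p i : Submodule k V) ≤ ⨆ i ≠ a, p i := by
        refine iSup₂_le fun i hi => ?_
        have : i ≠ a := fun h => ha (h ▸ hi)
        exact le_iSup₂ (f := fun i (_ : i ≠ a) => p i) i this
      exact disjoint_iff.mp ((hp a).mono_right hle)
    have := Submodule.finrank_sup_add_finrank_inf_eq (p a) (⨆ i ∈ s, p i)
    rw [hdisj] at this
    simp only [finrank_bot, add_zero] at this
    rw [hsup, this]

theorem isotropic_subspace_decomposition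
    {k V : Type*} [Field k] [IsAlgClosed k] [CharZero k]
    [AddCommGroup V] [Module k V] [FiniteDimensional k V]
    (n : ℕ) (hV : Module.finrank k V = 2 * n)
    (l1 l2 : LinearMap.BilinForm k V) (h1 : l1.IsAlt) (h2 : l2.IsAlt)
    (hker : ∀ a b : k, ¬(a = 0 ∧ b = 0) →
      LinearMap.ker (a • l1 + b • l2) ≠ ⊥ →
      Module.finrank k (LinearMap.ker (a • l1 + b • l2)) = 2)
    (l' : Fin n → LinearMap.BilinForm k V)
    (hl'mem : ∀ i, ∃ a b : k, ¬(a = 0 ∧ b = 0) ∧ l' i = a • l1 + b • l2)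
    (hl'deg : ∀ i, LinearMap.ker (l' i) ≠ ⊥)
    (K : Fin n → Submodule k V) (hK : ∀ i, K i = LinearMap.ker (l' i))
    (hint : DirectSum.IsInternal K)
    (U : Submodule k V) (hUdim : Module.finrank k U = n)
    (hU1 : ∀ x ∈ U, ∀ y ∈ U, l1 x y = 0)
    (hU2 : ∀ x ∈ U, ∀ y ∈ U, l2 x y = 0) :
    (∀ i, Module.finrank k (U ⊓ K i : Submodule k V) = 1) ∧
    U = ⨆ i, U ⊓ K i ∧
    iSupIndep (fun i => U ⊓ K i) := by
  classical
  have hindep : iSupIndep (fun i => U ⊓ K i) :=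
    hint.submodule_iSupIndep.mono fun i => inf_le_right
  have hpos : ∀ i, 1 ≤ Module.finrank k (U ⊓ K i : Submodule k V) := by
    intro i
    obtain ⟨a, b, hab, heq⟩ := hl'mem i
    have hLalt : (l' i).IsAlt := by
      intro x
      rw [heq]
      simp [h1 x, h2 x]
    have hKdim : Module.finrank k (K i) = 2 := by
      rw [hK i, heq]
      exact hker a b hab (heq ▸ hl'deg i)
    have hUiso : ∀ x ∈ U, ∀ y ∈ U, l' i x y = 0 := by
      intro x hx y hy
      rw [heq]
      simp [hU1 x hx y hy, hU2 x hx y hy]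
    by_contra hlt
    have hbot : U ⊓ K i = ⊥ := by
      rw [← Submodule.finrank_eq_zero (R := k)]
      omega
    set W : Submodule k (Module.Dual k V) := U.map (l' i) with hW
    have hWrank : Module.finrank k W = n := by
      have hker0 : LinearMap.ker ((l' i).domRestrict U) = ⊥ := by
        rw [LinearMap.ker_eq_bot']
        rintro ⟨u, hu⟩ hu0
        have h1' : l' i u = 0 := by
          simpa [LinearMap.domRestrict_apply] using hu0
        have h2' : u ∈ U ⊓ K i := ⟨hu, by rw [hK i]; exact h1'⟩
        rw [hbot] at h2'
        exact Subtype.ext (by simpa using h2')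
      have hrn := LinearMap.finrank_range_add_finrank_ker ((l' i).domRestrict U)
      rw [hker0, finrank_bot, add_zero, LinearMap.range_domRestrict, hUdim] at hrn
      rw [hW, ← hrn]
    have hcoann : Module.finrank k W.dualCoannihilator = n := by
      have h := Subspace.finrank_add_finrank_dualCoannihilator_eq W
      rw [hWrank, hV] at h
      omega
    have hUle : U ≤ W.dualCoannihilator := by
      intro u hu
      rw [Submodule.mem_dualCoannihilator]
      rintro φ hφ
      obtain ⟨x, hx, rfl⟩ := hφ
      exact hUiso x hx u hu
    have hKle : K i ≤ W.dualCoannihilator := by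
      intro v hv
      rw [Submodule.mem_dualCoannihilator]
      rintro φ hφ
      obtain ⟨x, hx, rfl⟩ := hφ
      have hvK : l' i v = 0 := by rw [hK i] at hv; exact hv
      have hneg := LinearMap.IsAlt.neg hLalt v x
      rw [hvK] at hneg
      simpa using hneg.symm
    have hsup_le : U ⊔ K i ≤ W.dualCoannihilator := sup_le hUle hKle
    have hsupdim : Module.finrank k (U ⊔ K i : Submodule k V) = n + 2 := by
      have h := Submodule.finrank_sup_add_finrank_inf_eq U (K i)
      rw [hbot, finrank_bot, add_zero, hUdim, hKdim] at h
      omega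
    have h := Submodule.finrank_mono hsup_le
    rw [hsupdim, hcoann] at h
    omega
  have hiSup_eq : (⨆ i, U ⊓ K i : Submodule k V) = ⨆ i ∈ Finset.univ, U ⊓ K i := by simp
  have hsum : Module.finrank k (⨆ i, U ⊓ K i : Submodule k V)
      = ∑ i, Module.finrank k (U ⊓ K i : Submodule k V) := by
    rw [hiSup_eq]
    exact aux_finrank_biSup (fun i => U ⊓ K i) hindep Finset.univ
  have hle : (⨆ i, U ⊓ K i : Submodule k V) ≤ U := iSup_le fun i => inf_le_left
  have hsum_le : ∑ i, Module.finrank k (U ⊓ K i : Submodule k V) ≤ n := by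
    have h := Submodule.finrank_mono hle
    rw [hUdim, hsum] at h
    exact h
  have hsum_ge : n ≤ ∑ i, Module.finrank k (U ⊓ K i : Submodule k V) := by
    calc n = ∑ _i : Fin n, 1 := by simp
    _ ≤ _ := Finset.sum_le_sum fun i _ => hpos i
  have hsum_eq : ∑ i, Module.finrank k (U ⊓ K i : Submodule k V) = n := le_antisymm hsum_le hsum_ge
  have hdim1 : ∀ i, Module.finrank k (U ⊓ K i : Submodule k V) = 1 := by
    intro i
    have hsums : (∑ _i : Fin n, 1) = ∑ i, Module.finrank k (U ⊓ K i : Submodule k V) := by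
      rw [hsum_eq]; simp
    exact ((Finset.sum_eq_sum_iff_of_le (fun i _ => hpos i)).mp hsums i (Finset.mem_univ i)).symm
  refine ⟨hdim1, ?_, hindep⟩
  refine (Submodule.eq_of_le_of_finrank_le hle ?_).symm
  rw [hUdim, hsum, hsum_eq]
end

section
/- Let V be a vector space of dimension 2n over a field k, and λ₁, λ₂ alternating bilinear forms on V such that in some basis e₁, f₁, …, eₙ, fₙ of V we have λ₁ = Σᵢ eᵢ* ∧ fᵢ* and λ₂ = Σᵢ aᵢ · eᵢ* ∧ fᵢ* with a₁, …, aₙ ∈ k pairwise distinct. Then for (u,v) ≠ (0,0), the form u·λ₁ + v·λ₂ is degenerate if and only if u + v·aᵢ = 0 for some i, and in that case its kernel is exactly Kᵢ = span(eᵢ, fᵢ). -/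
theorem degenerate_members_of_standard_pencil
    {k V : Type*} [Field k] [AddCommGroup V] [Module k V] [FiniteDimensional k V]
    (n : ℕ) (hV : Module.finrank k V = 2 * n)
    (b : Module.Basis (Fin n × Bool) k V)
    (a : Fin n → k) (hdist : Function.Injective a)
    (l1 l2 : LinearMap.BilinForm k V) (h1 : l1.IsAlt) (h2 : l2.IsAlt)
    (hl1 : ∀ i j : Fin n, ∀ s t : Bool,
      l1 (b (i, s)) (b (j, t)) =
        if i = j ∧ s = false ∧ t = true then 1
        else if i = j ∧ s = true ∧ t = false then -1 else 0)
    (hl2 : ∀ i j : Fin n, ∀ s t : Bool,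
      l2 (b (i, s)) (b (j, t)) =
        if i = j ∧ s = false ∧ t = true then a i
        else if i = j ∧ s = true ∧ t = false then -(a i) else 0) :
    ∀ u v : k, ¬(u = 0 ∧ v = 0) →
      ((LinearMap.ker (u • l1 + v • l2) ≠ ⊥) ↔ ∃ i, u + v * a i = 0) ∧
      (∀ i : Fin n, u + v * a i = 0 →
        LinearMap.ker (u • l1 + v • l2) =
          Submodule.span k {b (i, false), b (i, true)}) := by
  intro u v huv
  set L := u • l1 + v • l2 with hLdef
  have hL : ∀ (i j : Fin n) (s t : Bool), L (b (i, s)) (b (j, t)) =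
      (u + v * a i) * (if i = j ∧ s = false ∧ t = true then 1
        else if i = j ∧ s = true ∧ t = false then -1 else 0) := by
    intro i j s t
    have : L (b (i, s)) (b (j, t)) =
        u * (l1 (b (i, s)) (b (j, t))) + v * (l2 (b (i, s)) (b (j, t))) := by
      simp [hLdef]
    rw [this, hl1, hl2]
    split_ifs <;> ring
  have hformula : ∀ (x : V) (j : Fin n) (t : Bool),
      L x (b (j, t)) = (u + v * a j) * b.repr x (j, !t) * (if t then 1 else -1) := by
    intro x j t
    conv_lhs => rw [← b.sum_repr x]
    rw [map_sum, LinearMap.sum_apply]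
    rw [Finset.sum_eq_single ((j, !t) : Fin n × Bool)]
    · simp only [map_smul, LinearMap.smul_apply, smul_eq_mul, hL]
      cases t <;> simp <;> ring
    · rintro ⟨i, s⟩ _ hp
      simp only [map_smul, LinearMap.smul_apply, smul_eq_mul, hL]
      cases s <;> cases t <;> simp_all [Prod.ext_iff]
    · intro h
      exact absurd (Finset.mem_univ _) h
  have hker : ∀ x : V, x ∈ LinearMap.ker L ↔
      ∀ (j : Fin n) (t : Bool), (u + v * a j) * b.repr x (j, t) = 0 := by
    intro x
    rw [LinearMap.mem_ker]
    constructor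
    · intro hx j t
      have h0 := hformula x j (!t)
      rw [hx] at h0
      simp only [LinearMap.zero_apply, Bool.not_not] at h0
      cases t
      · simpa [mul_neg_one, neg_eq_zero] using h0.symm
      · simpa using h0.symm
    · intro hx
      apply b.ext
      rintro ⟨j, t⟩
      rw [hformula, hx]
      simp
  have hrepr_basis : ∀ (p q : Fin n × Bool), p ≠ q → b.repr (b p) q = 0 := by
    intro p q hpq
    rw [b.repr_self, Finsupp.single_eq_of_ne hpq.symm]
  have hbmem : ∀ i : Fin n, u + v * a i = 0 → ∀ t : Bool, b (i, t) ∈ LinearMap.ker L := by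
    intro i hi t
    rw [hker]
    intro j s
    rcases eq_or_ne ((j, s) : Fin n × Bool) (i, t) with h | h
    · injection h with h1 h2
      subst h1; subst h2
      rw [hi, zero_mul]
    · rw [hrepr_basis _ _ (fun hh => h hh.symm), mul_zero]
  constructor
  · constructor
    · intro hne
      by_contra hno
      push_neg at hno
      apply hne
      rw [eq_bot_iff]
      intro x hx
      rw [hker] at hx
      have hcoords : ∀ p : Fin n × Bool, b.repr x p = 0 := by
        rintro ⟨j, t⟩
        exact (mul_eq_zero.mp (hx j t)).resolve_left (hno j)
      have hrx : b.repr x = 0 := Finsupp.ext fun p => hcoords p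
      have : x = 0 := by
        have := congrArg b.repr.symm hrx
        simpa using this
      simp [this]
    · rintro ⟨i, hi⟩
      rw [Submodule.ne_bot_iff]
      exact ⟨b (i, false), hbmem i hi false, b.ne_zero _⟩
  · intro i hi
    have hdj : ∀ j : Fin n, j ≠ i → u + v * a j ≠ 0 := by
      intro j hj h
      have hv : v ≠ 0 := by
        intro hv0
        rw [hv0] at hi
        simp at hi
        exact huv ⟨hi, hv0⟩
      have hz : v * (a j - a i) = 0 := by linear_combination h - hi
      rcases mul_eq_zero.mp hz with h' | h'
      · exact hv h'
      · exact hj (hdist (sub_eq_zero.mp h'))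
    apply le_antisymm
    · intro x hx
      rw [hker] at hx
      have hx' : ∀ p : Fin n × Bool, p.1 ≠ i → b.repr x p = 0 := by
        rintro ⟨j, t⟩ hj
        exact (mul_eq_zero.mp (hx j t)).resolve_left (hdj j hj)
      have hxeq : x = ∑ p ∈ ({(i, false), (i, true)} : Finset (Fin n × Bool)),
          b.repr x p • b p := by
        conv_lhs => rw [← b.sum_repr x]
        symm
        apply Finset.sum_subset (Finset.subset_univ _)
        rintro ⟨j, t⟩ _ hp
        have hj : j ≠ i := by
          intro h
          subst h
          cases t <;> simp at hp
        rw [hx' (j, t) hj, zero_smul]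
      rw [hxeq]
      apply Submodule.sum_mem
      intro p hp
      apply Submodule.smul_mem
      apply Submodule.subset_span
      simp only [Finset.mem_insert, Finset.mem_singleton] at hp
      rcases hp with rfl | rfl
      · exact Set.mem_insert _ _
      · exact Set.mem_insert_iff.mpr (Or.inr rfl)
    · rw [Submodule.span_le]
      rintro y hy
      simp only [Set.mem_insert_iff, Set.mem_singleton_iff] at hy
      rcases hy with rfl | rfl
      · exact hbmem i hi false
      · exact hbmem i hi true
end
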